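/- arXiv:2007.02923 — 3 statements merged into one kernel-verified Lean document; each statement's English description precedes it below -/
import Mathlib

section
/- Let (T, 𝒯) and (S, 𝒮) be measurable spaces, let μ be a probability measure on T, and let κ, η be Markov kernels from T to S. Let ε ≥ 0 and δ ≥ 0, and suppose there is a measurable set G ⊆ T with μ(Gᶜ) ≤ δ such that for every z ∈ G the measures κ(z) and η(z) are (ε,δ)-indistinguishable: for all measurable A ⊆ S, κ(z)(A) ≤ e^ε·η(z)(A) + δ and η(z)(A) ≤ e^ε·κ(z)(A) + δ. Then the mixtures μ.bind κ and μ.bind η are (ε, 2δ)-indistinguishable: for all measurable A ⊆ S, (μ.bind κ)(A) ≤ e^ε·(μ.bind η)(A) + 2δ and (μ.bind η)(A) ≤ e^ε·(μ.bind κ)(A) + 2δ. -/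
/-!
Pointwise, `κ z A ≤ e^ε η z A + δ + 1_{Gᶜ}(z)`, using `κ z A ≤ 1` off `G`. Integrating against `μ`
gives `(μ.bind κ) A ≤ e^ε (μ.bind η) A + δ + μ Gᶜ`, and `μ Gᶜ ≤ δ` supplies the second `δ`.
-/

open MeasureTheory ProbabilityTheory

open scoped ENNReal

section

variable {T S : Type*} [MeasurableSpace T] [MeasurableSpace S]

theorem lintegral_le_mul_lintegral_add_of_le_on {μ : Measure T} [IsZeroOrProbabilityMeasure μ]
    {f g : T → ℝ≥0∞} (hg : Measurable g) {G : Set T} {c d : ℝ≥0∞} (hf : ∀ z, f z ≤ 1)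
    (h : ∀ z ∈ G, f z ≤ c * g z + d) :
    ∫⁻ z, f z ∂μ ≤ c * ∫⁻ z, g z ∂μ + d + μ Gᶜ := by
  have hpointwise : ∀ z, f z ≤ (c * g z + d) + Gᶜ.indicator 1 z := by
    intro z
    by_cases hz : z ∈ G
    · exact (h z hz).trans le_self_add
    · simpa [hz] using (hf z).trans le_add_self
  calc ∫⁻ z, f z ∂μ ≤ ∫⁻ z, (c * g z + d) + Gᶜ.indicator 1 z ∂μ := lintegral_mono hpointwise
    _ = (c * ∫⁻ z, g z ∂μ + d * μ Set.univ) + ∫⁻ z, Gᶜ.indicator 1 z ∂μ := by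
      rw [lintegral_add_left ((hg.const_mul c).add_const d), lintegral_add_right _ measurable_const,
        lintegral_const_mul c hg, lintegral_const]
    _ ≤ c * ∫⁻ z, g z ∂μ + d + μ Gᶜ := by
      gcongr
      · exact mul_le_of_le_one_right' prob_le_one
      · exact lintegral_indicator_one_le _

theorem Measure.bind_apply_le_mul_add_of_le_on {μ : Measure T} [IsZeroOrProbabilityMeasure μ]
    {κ η : Kernel T S} [IsZeroOrMarkovKernel κ] {G : Set T} {A : Set S} (hA : MeasurableSet A)
    {c d : ℝ≥0∞} (h : ∀ z ∈ G, κ z A ≤ c * η z A + d) :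
    μ.bind κ A ≤ c * μ.bind η A + d + μ Gᶜ := by
  rw [Measure.bind_apply hA κ.measurable.aemeasurable,
    Measure.bind_apply hA η.measurable.aemeasurable]
  exact lintegral_le_mul_lintegral_add_of_le_on (η.measurable_coe hA) (fun _ => prob_le_one) h

end

theorem bind_indistinguishable_of_ae_indistinguishable_general
    {T S : Type*} [MeasurableSpace T] [MeasurableSpace S]
    (μ : Measure T) [IsProbabilityMeasure μ]
    (κ η : ProbabilityTheory.Kernel T S) [IsMarkovKernel κ] [IsMarkovKernel η]
    (ε δ : ℝ) (hδ : 0 ≤ δ)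
    (G : Set T) (hGc : μ Gᶜ ≤ ENNReal.ofReal δ)
    (hind : ∀ z ∈ G, ∀ A : Set S, MeasurableSet A →
      κ z A ≤ ENNReal.ofReal (Real.exp ε) * η z A + ENNReal.ofReal δ ∧
      η z A ≤ ENNReal.ofReal (Real.exp ε) * κ z A + ENNReal.ofReal δ) :
    ∀ A : Set S, MeasurableSet A →
      (μ.bind κ) A ≤ ENNReal.ofReal (Real.exp ε) * (μ.bind η) A + ENNReal.ofReal (2 * δ) ∧
      (μ.bind η) A ≤ ENNReal.ofReal (Real.exp ε) * (μ.bind κ) A + ENNReal.ofReal (2 * δ) := by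
  intro A hA
  rw [two_mul, ENNReal.ofReal_add hδ hδ, ← add_assoc, ← add_assoc]
  exact ⟨(Measure.bind_apply_le_mul_add_of_le_on hA fun z hz => (hind z hz A hA).1).trans
      (by gcongr),
    (Measure.bind_apply_le_mul_add_of_le_on hA fun z hz => (hind z hz A hA).2).trans
      (by gcongr)⟩

/-- **Mixtures of pointwise indistinguishable kernels are indistinguishable.** If `μ` is a
probability measure on `T`, `κ` and `η` are Markov kernels from `T` to `S`, and there is a
measurable set `G` with `μ Gᶜ ≤ δ` such that for every `z ∈ G` the measures `κ z` and
`η z` are `(ε,δ)`-indistinguishable, then the mixtures `μ.bind κ` and `μ.bind η` are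
`(ε, 2δ)`-indistinguishable. -/
theorem bind_indistinguishable_of_ae_indistinguishable
    {T S : Type*} [MeasurableSpace T] [MeasurableSpace S]
    (μ : Measure T) [IsProbabilityMeasure μ]
    (κ η : ProbabilityTheory.Kernel T S) [IsMarkovKernel κ] [IsMarkovKernel η]
    (ε δ : ℝ) (hε : 0 ≤ ε) (hδ : 0 ≤ δ)
    (G : Set T) (hG : MeasurableSet G) (hGc : μ Gᶜ ≤ ENNReal.ofReal δ)
    (hind : ∀ z ∈ G, ∀ A : Set S, MeasurableSet A →
      κ z A ≤ ENNReal.ofReal (Real.exp ε) * η z A + ENNReal.ofReal δ ∧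
      η z A ≤ ENNReal.ofReal (Real.exp ε) * κ z A + ENNReal.ofReal δ) :
    ∀ A : Set S, MeasurableSet A →
      (μ.bind κ) A ≤ ENNReal.ofReal (Real.exp ε) * (μ.bind η) A + ENNReal.ofReal (2 * δ) ∧
      (μ.bind η) A ≤ ENNReal.ofReal (Real.exp ε) * (μ.bind κ) A + ENNReal.ofReal (2 * δ) :=
  bind_indistinguishable_of_ae_indistinguishable_general μ κ η ε δ hδ G hGc hind
end

section
/- Let n ≤ B be positive integers, let 0 ≤ p ≤ 2/n, and let X ∼ Binomial(B, p). Then for every δ' with 0 < δ' ≤ e^{-1}, P( X > (10B/n)·log(1/δ') ) ≤ δ'. -/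
open MeasureTheory ProbabilityTheory
open scoped ENNReal NNReal

/-! The Chernoff bound with exponent `s = 1` suffices:
`P(X ≥ t) ≤ e^{-t} 𝔼[e^X] = e^{-t} (1 - p + p e)^B ≤ exp(-t + B p (e - 1))`,
and with `a = B/n ≥ 1`, `L = log(1/δ') ≥ 1`, `t = 10 a L`, `B p ≤ 2a`, `e - 1 ≤ 2`
the exponent is at most `-10 a L + 4 a ≤ -L`. -/

set_option linter.deprecated false

namespace PMF

open Real

variable (p : ℝ≥0) (hp : p ≤ 1) (B : ℕ)

theorem binomial_mgf (s : ℝ) :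
    mgf (fun k : Fin (B + 1) => (k : ℝ)) (binomial p hp B).toMeasure s
      = (p * exp s + (1 - p)) ^ B := by
  rw [mgf, integral_eq_sum, add_pow, ← Fin.sum_univ_eq_sum_range]
  refine Finset.sum_congr rfl fun k _ => ?_
  simp only [binomial, ofFintype_apply, ENNReal.coe_toReal, smul_eq_mul, mul_comm s, exp_nat_mul]
  push_cast [NNReal.coe_sub hp]
  ring

theorem binomial_mgf_le_exp (s : ℝ) :
    mgf (fun k : Fin (B + 1) => (k : ℝ)) (binomial p hp B).toMeasure s
      ≤ exp (B * p * (exp s - 1)) := by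
  have hp' : (p : ℝ) ≤ 1 := hp
  rw [binomial_mgf, mul_assoc, exp_nat_mul]
  refine pow_le_pow_left₀ (by nlinarith [exp_pos s, p.coe_nonneg]) ?_ B
  linarith [add_one_le_exp (p * (exp s - 1))]

theorem binomial_measureReal_ge_le_exp (t : ℝ) {s : ℝ} (hs : 0 ≤ s) :
    (binomial p hp B).toMeasure.real {k | t ≤ (k : ℝ)}
      ≤ exp (-s * t + B * p * (exp s - 1)) := by
  rw [exp_add]
  exact (measure_ge_le_exp_mul_mgf t hs Integrable.of_finite).trans
    (mul_le_mul_of_nonneg_left (binomial_mgf_le_exp p hp B s) (exp_pos _).le)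

end PMF

/-- **Chernoff-type tail bound for the number of affected samples.** If
`X ∼ Binomial(B, p)` with `n ≤ B` and `p ≤ 2/n`, then for every `0 < δ' ≤ e⁻¹`,
`P(X > (10B/n)·log(1/δ')) ≤ δ'`. -/
theorem binomial_tail_bound
    (n B : ℕ) (hn : 0 < n) (hnB : n ≤ B)
    (p : ℝ≥0∞) (hp1 : p ≤ 1) (hp : p ≤ ENNReal.ofReal (2 / n)) :
    ∀ δ' : ℝ, 0 < δ' → δ' ≤ Real.exp (-1) →
      (PMF.binomial p.toNNReal
          (by simpa using ENNReal.toNNReal_mono ENNReal.one_ne_top hp1) B).toMeasure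
          {k : Fin (B + 1) | 10 * B / n * Real.log (1 / δ') < (k : ℝ)}
        ≤ ENNReal.ofReal δ' := by
  intro δ' hδ hδe
  set L := Real.log (1 / δ') with hL_def
  set a := (B : ℝ) / n
  have hL : 1 ≤ L := by
    rw [hL_def, one_div, Real.log_inv, le_neg, Real.log_le_iff_le_exp hδ]
    exact hδe
  have hδL : Real.exp (-L) = δ' := by
    rw [hL_def, one_div, Real.log_inv, neg_neg, Real.exp_log hδ]
  have ha : 1 ≤ a := by
    rw [one_le_div (by exact_mod_cast hn)]
    exact_mod_cast hnB
  have hBp : B * (p.toNNReal : ℝ) ≤ 2 * a := by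
    have : (p.toNNReal : ℝ) ≤ 2 / n := ENNReal.toReal_le_of_le_ofReal (by positivity) hp
    calc B * (p.toNNReal : ℝ) ≤ B * (2 / n) := by gcongr
      _ = 2 * a := by ring
  have he : Real.exp 1 - 1 ≤ 2 := by linarith [Real.exp_one_lt_d9]
  have hexponent : -1 * (10 * a * L) + B * p.toNNReal * (Real.exp 1 - 1) ≤ -L := by
    nlinarith [mul_le_mul hBp he (by linarith [Real.add_one_le_exp 1]) (by positivity)]
  calc _ ≤ (PMF.binomial _ _ B).toMeasure {k | 10 * a * L ≤ (k : ℝ)} :=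
        measure_mono fun k hk => le_of_lt (by simpa [a, mul_div_assoc] using hk)
    _ = ENNReal.ofReal ((PMF.binomial _ _ B).toMeasure.real {k | 10 * a * L ≤ (k : ℝ)}) :=
        (ofReal_measureReal (measure_ne_top _ _)).symm
    _ ≤ ENNReal.ofReal δ' := by
        rw [← hδL]
        refine ENNReal.ofReal_le_ofReal ?_
        exact (PMF.binomial_measureReal_ge_le_exp _ _ B _ zero_le_one).trans
          (Real.exp_le_exp.mpr hexponent)
end

section
/- Let m, M > 0, set γ = M/(M + 2m), and let ξ ≥ 1 be a real number. Then for every positive integer T', γ^{T'} ≤ (M/(m·T'))^{1/(2ξ)}. -/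
/-- **Generalized contraction factor estimate.** For `m, M > 0`, `γ = M/(M + 2m)`,
and any real `ξ ≥ 1`, every positive integer `T'` satisfies
`γ^{T'} ≤ (M/(mT'))^{1/(2ξ)}`. -/
theorem contraction_factor_bound_general
    (m M : ℝ) (hm : 0 < m) (hM : 0 < M) (γ : ℝ) (hγ : γ = M / (M + 2 * m))
    (ξ : ℝ) (hξ : 1 ≤ ξ) :
    ∀ T' : ℕ, 0 < T' →
      γ ^ T' ≤ (M / (m * T')) ^ (1 / (2 * ξ)) := by
  intro T' hT'
  have ht : (1 : ℝ) ≤ (T' : ℝ) := by exact_mod_cast hT'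
  have htpos : (0 : ℝ) < (T' : ℝ) := by linarith
  have hden : (0 : ℝ) < M + 2 * m := by linarith
  have hγpos : 0 < γ := by rw [hγ]; positivity
  have hγ1 : γ ≤ 1 := by
    rw [hγ, div_le_one hden]; linarith
  have hγinv : γ = (1 + 2 * m / M)⁻¹ := by
    rw [hγ]
    rw [div_eq_iff hden.ne', inv_mul_eq_div, eq_div_iff (by positivity : (1 + 2*m/M) ≠ 0)]
    field_simp
  -- Bernoulli bound: γ^(2T') ≤ M/(m T')
  have hbern : 1 + (2 * T' : ℕ) * (2 * m / M) ≤ (1 + 2 * m / M) ^ (2 * T') := by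
    apply one_add_mul_le_pow
    have : (0:ℝ) ≤ 2 * m / M := by positivity
    linarith
  have hx : (0:ℝ) < M / (m * T') := by positivity
  have key : γ ^ (2 * T') ≤ M / (m * T') := by
    rw [hγinv, inv_pow]
    rw [inv_le_comm₀ (by positivity) hx]
    calc (M / (m * T'))⁻¹ = m * T' / M := by rw [inv_div]
      _ ≤ 1 + (2 * T' : ℕ) * (2 * m / M) := by
          push_cast
          rw [div_le_iff₀ hM]
          have : m * T' ≤ 4 * m * T' := by nlinarith
          calc m * T' ≤ 4 * m * T' := this
            _ ≤ (1 + 2 * T' * (2 * m / M)) * M := by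
                field_simp; nlinarith
      _ ≤ (1 + 2 * m / M) ^ (2 * T') := hbern
  have hξpos : (0:ℝ) < 2 * ξ := by linarith
  have hpowpos : 0 < γ ^ T' := pow_pos hγpos T'
  have hpow1 : γ ^ T' ≤ 1 := pow_le_one₀ hγpos.le hγ1
  have key2 : (γ ^ T') ^ (2 * ξ) ≤ M / (m * T') := by
    calc (γ ^ T') ^ (2 * ξ) ≤ (γ ^ T') ^ (2 : ℝ) := by
          apply Real.rpow_le_rpow_of_exponent_ge hpowpos hpow1
          linarith
      _ = γ ^ (2 * T') := by
          rw [show (2:ℝ) = ((2:ℕ):ℝ) by norm_num, Real.rpow_natCast, ← pow_mul,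
            Nat.mul_comm]
      _ ≤ M / (m * T') := key
  have := Real.rpow_le_rpow (by positivity) key2 (by positivity : (0:ℝ) ≤ 1 / (2 * ξ))
  rwa [← Real.rpow_natCast γ T', ← Real.rpow_mul hγpos.le, ← Real.rpow_mul hγpos.le,
    mul_one_div, mul_div_assoc, div_self hξpos.ne', mul_one, Real.rpow_natCast] at this
end
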